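/- arXiv:1612.07015 — 4 statements merged into one kernel-verified Lean document; each statement's English description precedes it below -/
import Mathlib

section
/- For every nondeterministic unitary OBDD N computing a Boolean function f : {0,1}^n → {0,1} with variable order π, and every k with 0 < k < n, the width of N is at least the size of any strong 1-fooling set S_k^π for f. -/
open scoped BigOperators

/-- State of a nondeterministic unitary OBDD of width `d` after reading input `x`
in variable order `π`: at step `j` the unitary `U j b` is applied, where `b` is the
value of the tested variable `x_{π j}`. -/
noncomputable def nuRun {n d : ℕ} (U : Fin n → Bool → Matrix (Fin d) (Fin d) ℂ)
    (π : Equiv.Perm (Fin n)) (init : Fin d → ℂ) (x : Fin n → Bool) : Fin d → ℂ :=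
  (List.ofFn fun j : Fin n => U j (x (π j))).foldl (fun v M => M.mulVec v) init

/-- All transition matrices are unitary. -/
def IsUnitaryFamily {n d : ℕ} (U : Fin n → Bool → Matrix (Fin d) (Fin d) ℂ) : Prop :=
  ∀ j b, U j b ∈ Matrix.unitaryGroup (Fin d) ℂ

/-- The initial state is a unit vector. -/
def NormalizedInit {d : ℕ} (init : Fin d → ℂ) : Prop :=
  ∑ q, ‖init q‖ ^ 2 = 1

/-- Nondeterministic acceptance: the projection of the final state onto the
accepting subspace (spanned by the accepting basis states `acc`) is nonzero. -/
def nuAccepts {n d : ℕ} (U : Fin n → Bool → Matrix (Fin d) (Fin d) ℂ)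
    (π : Equiv.Perm (Fin n)) (init : Fin d → ℂ) (acc : Finset (Fin d))
    (x : Fin n → Bool) : Prop :=
  ∃ q ∈ acc, nuRun U π init x q ≠ 0

/-- The NUOBDD computes `f`: it accepts exactly the inputs in `f⁻¹(1)`. -/
def nuComputes {n d : ℕ} (U : Fin n → Bool → Matrix (Fin d) (Fin d) ℂ)
    (π : Equiv.Perm (Fin n)) (init : Fin d → ℂ) (acc : Finset (Fin d))
    (f : (Fin n → Bool) → Bool) : Prop :=
  ∀ x, nuAccepts U π init acc x ↔ f x = true

/-- Number of 1s in the input. -/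
def countOnes {n : ℕ} (x : Fin n → Bool) : ℕ :=
  (Finset.univ.filter fun i => x i = true).card

/-- Combine a partial assignment `σ` on the first `k` variables in order `π`
(variable `π j` gets value `σ j` for `j < k`) with an assignment `γ` on the
remaining `n - k` variables, producing a full input in `{0,1}^n`. -/
def combine {n : ℕ} (k : ℕ) (hk : k ≤ n) (π : Equiv.Perm (Fin n))
    (σ : Fin k → Bool) (γ : Fin (n - k) → Bool) : Fin n → Bool :=
  fun i =>
    if h : ((π.symm i : Fin n) : ℕ) < k then σ ⟨((π.symm i : Fin n) : ℕ), h⟩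
    else γ ⟨((π.symm i : Fin n) : ℕ) - k, by
      have h1 : ((π.symm i : Fin n) : ℕ) < n := (π.symm i).isLt
      omega⟩

/-- A strong 1-fooling set for `f` at level `k` under order `π`: every pair
`(σ, γ)` satisfies `f(σγ) = 1`, and for distinct pairs `(σ, γ)`, `(σ', γ')` we
have `f(σγ') = 0` and `f(σ'γ) = 0`. -/
def IsStrongFoolingSet {n : ℕ} (k : ℕ) (hk : k ≤ n)
    (f : (Fin n → Bool) → Bool) (π : Equiv.Perm (Fin n))
    (S : Finset ((Fin k → Bool) × (Fin (n - k) → Bool))) : Prop :=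
  (∀ p ∈ S, f (combine k hk π p.1 p.2) = true) ∧
  (∀ p ∈ S, ∀ q ∈ S, p ≠ q →
    f (combine k hk π p.1 q.2) = false ∧ f (combine k hk π q.1 p.2) = false)

/-!
Reading the first `k` variables takes the initial state to a vector `a σ ∈ ℂ^d`, and the rest
of the run under `γ` followed by the projection onto the accepting states is a linear map `L γ`.
For a pair `(σ, γ)` of a strong fooling set, `L γ (a σ) ≠ 0` since `σγ` is accepted, while
`L γ (a σ') = 0` for every other pair since `σ'γ` is rejected. Applying `L γ` to a linear
relation among the `a σ` therefore kills all of its coefficients but the one at `σ`, so these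
vectors are linearly independent and there are at most `d` of them.
-/

open Matrix Module

theorem LinearIndependent.of_apply_ne_zero_of_apply_eq_zero {ι R V W : Type*} [Ring R] [IsDomain R]
    [AddCommGroup V] [Module R V] [AddCommGroup W] [Module R W] [Module.IsTorsionFree R W]
    {v : ι → V} (L : ι → V →ₗ[R] W) (hself : ∀ i, L i (v i) ≠ 0)
    (hcross : ∀ i j, i ≠ j → L i (v j) = 0) :
    LinearIndependent R v := by
  rw [linearIndependent_iff']
  intro s g hg i hi
  have hgi : g i • L i (v i) = 0 := by
    have := congrArg (L i) hg
    rwa [map_sum, map_zero, Finset.sum_eq_single_of_mem i hi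
      fun j _ hji => by rw [map_smul, hcross i j hji.symm, smul_zero], map_smul] at this
  exact (smul_eq_zero.mp hgi).resolve_right (hself i)

theorem card_le_finrank_of_fooling {α β R V W : Type*} [Ring R] [IsDomain R]
    [StrongRankCondition R] [AddCommGroup V] [Module R V] [Module.Finite R V]
    [AddCommGroup W] [Module R W] [Module.IsTorsionFree R W]
    (a : α → V) (L : β → V →ₗ[R] W) (S : Finset (α × β))
    (hself : ∀ p ∈ S, L p.2 (a p.1) ≠ 0)
    (hcross : ∀ p ∈ S, ∀ q ∈ S, p ≠ q → L p.2 (a q.1) = 0) :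
    S.card ≤ finrank R V := by
  have hli : LinearIndependent R fun p : S => a p.1.1 :=
    .of_apply_ne_zero_of_apply_eq_zero (fun p : S => L p.1.2) (fun p => hself p p.2)
      fun p q hpq => hcross p p.2 q q.2 (Subtype.coe_injective.ne hpq)
  simpa using hli.fintype_card_le_finrank

theorem List.ofFn_eq_append_of_le {α : Type*} {n k : ℕ} (hk : k ≤ n) (f : Fin n → α) :
    List.ofFn f = List.ofFn (fun j : Fin k => f (Fin.castLE hk j)) ++
      List.ofFn (fun j : Fin (n - k) => f ⟨k + j, by omega⟩) := by
  apply List.ext_getElem (by simp; omega)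
  intro i h₁ h₂
  simp only [List.getElem_append, List.getElem_ofFn, List.length_ofFn]
  split_ifs with hi
  · rfl
  · congr 1; ext; dsimp only; omega

theorem List.foldl_mulVec_eq_prod_mulVec {m R : Type*} [Fintype m] [DecidableEq m] [Semiring R]
    (L : List (Matrix m m R)) (v : m → R) :
    L.foldl (fun v M => M *ᵥ v) v = L.reverse.prod *ᵥ v := by
  induction L generalizing v with
  | nil => simp
  | cons M L ih => simp [ih, Matrix.mulVec_mulVec]

section NUOBDD

variable {n k d : ℕ} (hk : k ≤ n) (π : Equiv.Perm (Fin n))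

theorem combine_apply_of_lt (σ : Fin k → Bool) (γ : Fin (n - k) → Bool) (j : Fin n) (hj : j < k) :
    combine k hk π σ γ (π j) = σ ⟨j, hj⟩ := by
  simp [combine, hj]

theorem combine_apply_add (σ : Fin k → Bool) (γ : Fin (n - k) → Bool) (j : Fin (n - k)) :
    combine k hk π σ γ (π ⟨k + j, by omega⟩) = γ j := by
  simp [combine]

variable (U : Fin n → Bool → Matrix (Fin d) (Fin d) ℂ)

noncomputable def prefixState (init : Fin d → ℂ) (σ : Fin k → Bool) : Fin d → ℂ :=
  (List.ofFn fun j : Fin k => U (Fin.castLE hk j) (σ j)).foldl (fun v M => M *ᵥ v) init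

noncomputable def suffixMatrix (γ : Fin (n - k) → Bool) : Matrix (Fin d) (Fin d) ℂ :=
  (List.ofFn fun j : Fin (n - k) => U ⟨k + j, by omega⟩ (γ j)).reverse.prod

theorem nuRun_combine (init : Fin d → ℂ) (σ : Fin k → Bool) (γ : Fin (n - k) → Bool) :
    nuRun U π init (combine k hk π σ γ) = suffixMatrix hk U γ *ᵥ prefixState hk U init σ := by
  rw [nuRun, List.ofFn_eq_append_of_le hk, List.foldl_append, List.foldl_mulVec_eq_prod_mulVec]
  simp only [combine_apply_add, Fin.castLE, combine_apply_of_lt, Fin.is_lt]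
  rfl

theorem nuAccepts_iff_funLeft_ne_zero (init : Fin d → ℂ) (acc : Finset (Fin d))
    (x : Fin n → Bool) :
    nuAccepts U π init acc x ↔
      LinearMap.funLeft ℂ ℂ (Subtype.val : acc → Fin d) (nuRun U π init x) ≠ 0 := by
  simp [nuAccepts, funext_iff, LinearMap.funLeft_apply]

end NUOBDD

theorem nuobdd_width_ge_foolingSet_general
    (n k d : ℕ) (hk2 : k < n)
    (f : (Fin n → Bool) → Bool)
    (U : Fin n → Bool → Matrix (Fin d) (Fin d) ℂ)
    (π : Equiv.Perm (Fin n)) (init : Fin d → ℂ)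
    (acc : Finset (Fin d))
    (hcomp : nuComputes U π init acc f)
    (S : Finset ((Fin k → Bool) × (Fin (n - k) → Bool)))
    (hS : IsStrongFoolingSet k (le_of_lt hk2) f π S) :
    S.card ≤ d := by
  set hk := le_of_lt hk2
  set L : (Fin (n - k) → Bool) → (Fin d → ℂ) →ₗ[ℂ] (acc → ℂ) := fun γ =>
    LinearMap.funLeft ℂ ℂ Subtype.val ∘ₗ (suffixMatrix hk U γ).mulVecLin
  have hf : ∀ σ γ, f (combine k hk π σ γ) = true ↔ L γ (prefixState hk U init σ) ≠ 0 :=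
    fun σ γ => by rw [← hcomp, nuAccepts_iff_funLeft_ne_zero, nuRun_combine]; rfl
  have hself : ∀ p ∈ S, L p.2 (prefixState hk U init p.1) ≠ 0 :=
    fun p hp => (hf _ _).1 (hS.1 p hp)
  have hcross : ∀ p ∈ S, ∀ q ∈ S, p ≠ q → L p.2 (prefixState hk U init q.1) = 0 :=
    fun p hp q hq hpq => not_not.1 fun hne => by
      simpa [(hS.2 q hq p hp (Ne.symm hpq)).1] using (hf _ _).2 hne
  exact (card_le_finrank_of_fooling _ L S hself hcross).trans_eq (finrank_fin_fun ℂ)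

/-- For every nondeterministic unitary OBDD `N` computing `f : {0,1}^n → {0,1}`
with variable order `π`, and every `k` with `0 < k < n`, the width of `N` is at
least the size of any strong 1-fooling set `S_k^π` for `f`. -/
theorem nuobdd_width_ge_foolingSet
    (n k d : ℕ) (hk1 : 0 < k) (hk2 : k < n)
    (f : (Fin n → Bool) → Bool)
    (U : Fin n → Bool → Matrix (Fin d) (Fin d) ℂ)
    (hU : IsUnitaryFamily U)
    (π : Equiv.Perm (Fin n)) (init : Fin d → ℂ) (hinit : NormalizedInit init)
    (acc : Finset (Fin d))
    (hcomp : nuComputes U π init acc f)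
    (S : Finset ((Fin k → Bool) × (Fin (n - k) → Bool)))
    (hS : IsStrongFoolingSet k (le_of_lt hk2) f π S) :
    S.card ≤ d :=
  nuobdd_width_ge_foolingSet_general n k d hk2 f U π init acc hcomp S hS
end

section
/- For every n and every k with 0 ≤ k ≤ n, there exists an exact unitary OBDD (in fact a reversible deterministic OBDD, i.e., using only permutation matrices) of width max{k+1, n−k+1} computing EXACT_n^k. -/
/-- Run of a reversible deterministic OBDD of width `d`: the bits are read in
order `π`, and at step `j` the permutation `P j b` of the `d` states is applied,
where `b` is the value of the tested variable. -/
def revRun {n d : ℕ} (P : Fin n → Bool → Equiv.Perm (Fin d))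
    (π : Equiv.Perm (Fin n)) (s0 : Fin d) (x : Fin n → Bool) : Fin d :=
  (List.ofFn fun j : Fin n => P j (x (π j))).foldl (fun s p => p s) s0

/-!
The OBDD counts the ones modulo `d = max (k+1) (n-k+1)`: reading the bit `b` adds `b` to the
state in `ℤ/d`, a permutation, so from state `0` it ends in `countOnes x mod d`. Since the count
`c` lies in `[0, n]` while `k < d` and `n - k < d`, we have `|c - k| < d`, so `c ≡ k (mod d)`
forces `c = k`.
-/

open Fin.CommRing

theorem List.foldl_map_addLeft {G : Type*} [AddCommGroup G] (l : List G) (s : G) :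
    (l.map Equiv.addLeft).foldl (fun s p => p s) s = l.sum + s := by
  induction l generalizing s with
  | nil => simp
  | cons a t ih =>
    rw [List.map_cons, List.foldl_cons, ih, List.sum_cons, Equiv.coe_addLeft, add_comm a,
      add_assoc]

theorem revRun_addLeft {n d : ℕ} [NeZero d] (f : Bool → Fin d) (π : Equiv.Perm (Fin n))
    (s0 : Fin d) (x : Fin n → Bool) :
    revRun (fun _ b => Equiv.addLeft (f b)) π s0 x = ∑ j, f (x j) + s0 := by
  have hsteps : (List.ofFn fun j => Equiv.addLeft (f (x (π j)))) =
      (List.ofFn fun j => f (x (π j))).map Equiv.addLeft := by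
    rw [List.map_ofFn]; rfl
  rw [revRun, hsteps, List.foldl_map_addLeft, List.sum_ofFn, Equiv.sum_comp π (fun j => f (x j))]

theorem countOnes_eq_sum_toNat {n : ℕ} (x : Fin n → Bool) :
    countOnes x = ∑ j, (x j).toNat := by
  rw [countOnes, Finset.card_filter]
  exact Finset.sum_congr rfl fun j _ => by cases x j <;> rfl

theorem countOnes_le {n : ℕ} (x : Fin n → Bool) : countOnes x ≤ n :=
  (Finset.card_filter_le _ _).trans_eq (Finset.card_fin n)

theorem revRun_addLeft_toNat {n d : ℕ} [NeZero d] (π : Equiv.Perm (Fin n)) (x : Fin n → Bool) :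
    revRun (fun _ b => Equiv.addLeft (b.toNat : Fin d)) π 0 x = (countOnes x : Fin d) := by
  rw [revRun_addLeft, add_zero, countOnes_eq_sum_toNat, Nat.cast_sum]

theorem Fin.natCast_eq_natCast_iff_of_abs_sub_lt {d a b : ℕ} [NeZero d]
    (h : |(b : ℤ) - a| < d) : (a : Fin d) = b ↔ a = b :=
  ⟨fun hab => Nat.ModEq.eq_of_abs_lt (Fin.ext_iff.mp hab) h, congrArg _⟩

theorem exists_reversible_obdd_exact_general (n k : ℕ) :
    ∃ (π : Equiv.Perm (Fin n))
      (P : Fin n → Bool → Equiv.Perm (Fin (max (k + 1) (n - k + 1))))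
      (s0 : Fin (max (k + 1) (n - k + 1)))
      (acc : Finset (Fin (max (k + 1) (n - k + 1)))),
      ∀ x : Fin n → Bool, (revRun P π s0 x ∈ acc ↔ countOnes x = k) := by
  have : NeZero (max (k + 1) (n - k + 1)) := ⟨by positivity⟩
  refine ⟨1, fun _ b => Equiv.addLeft (b.toNat : Fin _), 0, {(k : Fin _)}, fun x => ?_⟩
  rw [Finset.mem_singleton, revRun_addLeft_toNat]
  apply Fin.natCast_eq_natCast_iff_of_abs_sub_lt
  have hcount := countOnes_le x
  rw [abs_sub_lt_iff]
  omega

/-- For every `n` and every `k ≤ n`, there exists a reversible deterministic OBDD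
(transitions are permutations of the state set, hence an exact unitary OBDD) of
width `max (k+1) (n-k+1)` computing `EXACT_n^k`. -/
theorem exists_reversible_obdd_exact (n k : ℕ) (hk : k ≤ n) :
    ∃ (π : Equiv.Perm (Fin n))
      (P : Fin n → Bool → Equiv.Perm (Fin (max (k + 1) (n - k + 1))))
      (s0 : Fin (max (k + 1) (n - k + 1)))
      (acc : Finset (Fin (max (k + 1) (n - k + 1)))),
      ∀ x : Fin n → Bool, (revRun P π s0 x ∈ acc ↔ countOnes x = k) :=
  exists_reversible_obdd_exact_general n k
end

section
/- For 2p ≤ n, every nondeterministic OBDD computing MOD_n^p has width at least p. -/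
/-- `MOD_n^p(σ) = 1` iff the number of 1s in `σ` is divisible by `p`. -/
def MODp (n p : ℕ) (x : Fin n → Bool) : Bool := decide (p ∣ countOnes x)

/-- Nondeterministic acceptance for an NOBDD of width `d`: there is a computation
path starting at `s0`, following at each step `j` the nondeterministic transition
relation `step j b` on the tested bit value `b = x (π j)`, and ending in an
accepting node. -/
def noAccepts {n d : ℕ} (step : Fin n → Bool → Fin d → Fin d → Prop)
    (π : Equiv.Perm (Fin n)) (s0 : Fin d) (acc : Finset (Fin d))
    (x : Fin n → Bool) : Prop :=
  ∃ path : Fin (n + 1) → Fin d, path 0 = s0 ∧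
    (∀ j : Fin n, step j (x (π j)) (path j.castSucc) (path j.succ)) ∧
    path (Fin.last n) ∈ acc

/-- The NOBDD computes `f`: it accepts exactly the inputs in `f⁻¹(1)`. -/
def noComputes {n d : ℕ} (step : Fin n → Bool → Fin d → Fin d → Prop)
    (π : Equiv.Perm (Fin n)) (s0 : Fin d) (acc : Finset (Fin d))
    (f : (Fin n → Bool) → Bool) : Prop :=
  ∀ x, noAccepts step π s0 acc x ↔ f x = true

lemma card_filter_val_mem (n : ℕ) (S : Finset ℕ) (hS : ∀ s ∈ S, s < n) :
    (Finset.univ.filter fun j : Fin n => (j : ℕ) ∈ S).card = S.card := by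
  rw [← Finset.card_image_of_injective _ Fin.val_injective]
  congr 1
  ext m
  simp only [Finset.mem_image, Finset.mem_filter, Finset.mem_univ, true_and]
  constructor
  · rintro ⟨j, hj, rfl⟩; exact hj
  · intro hm; exact ⟨⟨m, hS m hm⟩, hm, rfl⟩

lemma countOnes_perm {n : ℕ} (e : Equiv.Perm (Fin n)) (y : Fin n → Bool) :
    countOnes (fun i => y (e i)) = countOnes y := by
  have h : (Finset.univ.filter fun i => y (e i) = true)
      = (Finset.univ.filter fun i => y i = true).image e.symm := by
    ext i
    simp only [Finset.mem_filter, Finset.mem_univ, true_and, Finset.mem_image]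
    constructor
    · intro hi; exact ⟨e i, hi, by simp⟩
    · rintro ⟨a, ha, rfl⟩; simpa using ha
  unfold countOnes
  rw [h, Finset.card_image_of_injective _ e.symm.injective]

/-- For `2p ≤ n` (and `p ≥ 1`), every nondeterministic OBDD computing `MOD_n^p`
has width at least `p`. -/
theorem nobdd_mod_lower_bound
    (n p d : ℕ) (hp : 1 ≤ p) (h2p : 2 * p ≤ n)
    (step : Fin n → Bool → Fin d → Fin d → Prop)
    (π : Equiv.Perm (Fin n)) (s0 : Fin d) (acc : Finset (Fin d))
    (hcomp : noComputes step π s0 acc (MODp n p)) :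
    p ≤ d := by
  have hpn : p < n := by omega
  -- the witness inputs, described in "time" coordinates
  set S : ℕ → ℕ → Finset ℕ := fun a b => Finset.range a ∪ Finset.Ico p (2 * p - b)
    with hSdef
  set x : ℕ → ℕ → Fin n → Bool :=
    fun a b i => decide ((π.symm i : ℕ) ∈ S a b) with hxdef
  have hxbit : ∀ a b (j : Fin n), x a b (π j) = decide ((j : ℕ) ∈ S a b) := by
    intro a b j; simp [hxdef]
  have hmem : ∀ a b m, m ∈ S a b ↔ (m < a ∨ (p ≤ m ∧ m < 2 * p - b)) := by
    intro a b m; simp [hSdef]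
  have hcount : ∀ a b, a ≤ p → b ≤ p → countOnes (x a b) = a + (p - b) := by
    intro a b ha hb
    have h1 : countOnes (x a b) = countOnes (fun j : Fin n => decide ((j : ℕ) ∈ S a b)) := by
      have := countOnes_perm (n := n) π.symm (fun j : Fin n => decide ((j : ℕ) ∈ S a b))
      simpa [hxdef] using this
    rw [h1]
    have h2 : countOnes (fun j : Fin n => decide ((j : ℕ) ∈ S a b)) = (S a b).card := by
      unfold countOnes
      simp only [decide_eq_true_eq]
      apply card_filter_val_mem
      intro s hs
      rw [hmem] at hs
      omega
    rw [h2, hSdef]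
    rw [Finset.card_union_of_disjoint]
    · simp only [Finset.card_range, Nat.card_Ico]
      omega
    · rw [Finset.disjoint_left]
      intro m hm hm'
      simp only [Finset.mem_range] at hm
      simp only [Finset.mem_Ico] at hm'
      omega
  -- each diagonal input is accepted
  have hA : ∀ k : Fin p, noAccepts step π s0 acc (x k k) := by
    intro k
    apply (hcomp _).mpr
    have hc := hcount k k (le_of_lt k.isLt) (le_of_lt k.isLt)
    have : countOnes (x k k) = p := by omega
    simp [ MODp, this]
  choose path hpath using hA
  have hplt : p < n + 1 := by omega
  set F : Fin p → Fin d := fun k => path k ⟨p, hplt⟩ with hFdef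
  have hinj : Function.Injective F := by
    intro k k' hF
    -- spliced path
    set q : Fin (n + 1) → Fin d :=
      fun j => if (j : ℕ) < p then path k j else path k' j with hqdef
    have hw : noAccepts step π s0 acc (x k k') := by
      refine ⟨q, ?_, ?_, ?_⟩
      · have : ((0 : Fin (n + 1)) : ℕ) < p := by simp only [Fin.val_zero]; omega
        simp only [hqdef, this, if_pos]
        exact (hpath k).1
      · intro j
        rcases Nat.lt_or_ge (j : ℕ) p with hj | hj
        · have hbit : x k k' (π j) = x k k (π j) := by
            rw [hxbit, hxbit]
            simp only [decide_eq_decide, hmem]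
            omega
          have hcs : q j.castSucc = path k j.castSucc := by
            simp [hqdef, Fin.coe_castSucc, hj]
          have hsu : q j.succ = path k j.succ := by
            rcases Nat.lt_or_ge ((j : ℕ) + 1) p with hj1 | hj1
            · simp [hqdef, Fin.val_succ, hj1]
            · have hjp : (j : ℕ) + 1 = p := by omega
              have hje : j.succ = (⟨p, hplt⟩ : Fin (n + 1)) := by
                apply Fin.ext; simp [Fin.val_succ, hjp]
              rw [hje]
              have : ¬ (p < p) := lt_irrefl p
              simp only [hqdef, this, if_neg, not_false_iff]
              exact hF.symm
          rw [hbit, hcs, hsu]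
          exact (hpath k).2.1 j
        · have hbit : x k k' (π j) = x k' k' (π j) := by
            rw [hxbit, hxbit]
            simp only [decide_eq_decide, hmem]
            have := k.isLt; have := k'.isLt
            omega
          have hcs : q j.castSucc = path k' j.castSucc := by
            simp [hqdef, Fin.coe_castSucc, Nat.not_lt.mpr hj]
          have hsu : q j.succ = path k' j.succ := by
            simp [hqdef, Fin.val_succ, Nat.not_lt.mpr (by omega : p ≤ (j : ℕ) + 1)]
          rw [hbit, hcs, hsu]
          exact (hpath k').2.1 j
      · have : ¬ ((Fin.last n : ℕ) < p) := by simp [Fin.last]; omega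
        simp only [hqdef, this, if_neg, not_false_iff]
        exact (hpath k').2.2
    -- acceptance forces the count to be divisible by p
    have hdvd : p ∣ countOnes (x k k') := by
      have := (hcomp _).mp hw
      simpa [ MODp] using this
    have hc := hcount k k' (le_of_lt k.isLt) (le_of_lt k'.isLt)
    obtain ⟨c, hcc⟩ := hdvd
    rw [hc] at hcc
    have hk := k.isLt
    have hk' := k'.isLt
    have hkeq : (k : ℕ) = (k' : ℕ) := by
      rcases c with _ | _ | c
      · simp at hcc; omega
      · simp at hcc; omega
      · have h2 : 2 * p ≤ (k : ℕ) + (p - (k' : ℕ)) := by rw [hcc]; nlinarith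
        omega
    exact Fin.ext hkeq
  have := Fintype.card_le_of_injective F hinj
  simpa using this
end

section
/- For every p with 2p ≤ n and every variable order π, the set S = {(σ^i, γ^i) : i = 0,...,p−1} with σ^i = 0^{n−p+1−i}1^i ∈ {0,1}^{n−p+1} and γ^i = 0^{i−1}1^{p−i} ∈ {0,1}^{p−1} (interpreting concatenation via the order π) is a strong 1-fooling set of size p for MOD_n^p at level n−p+1. -/
lemma card_ge_aux (m c : ℕ) :
    (Finset.univ.filter fun t : Fin m => c ≤ (t : ℕ)).card = m - c := by
  rw [Finset.card_filter, Fin.sum_univ_eq_sum_range (fun j => if c ≤ j then 1 else 0) m,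
    ← Finset.card_filter]
  have h : (Finset.range m).filter (fun j => c ≤ j) = Finset.Ico c m := by
    ext j; simp [Finset.mem_Ico]; omega
  rw [h, Nat.card_Ico]

lemma not_dvd_aux (p c : ℕ) (h1 : 0 < c) (h2 : c < 2 * p) (h3 : c ≠ p) : ¬ p ∣ c := by
  rintro ⟨d, rfl⟩
  have hd : d < 2 := by
    by_contra hd
    push_neg at hd
    have : p * 2 ≤ p * d := Nat.mul_le_mul_left p hd
    omega
  interval_cases d <;> omega

lemma countOnes_combine {n : ℕ} (k : ℕ) (hk : k ≤ n) (π : Equiv.Perm (Fin n))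
    (σ : Fin k → Bool) (γ : Fin (n - k) → Bool) :
    countOnes (combine k hk π σ γ) = countOnes σ + countOnes γ := by
  classical
  set F : ℕ → ℕ := fun j =>
    if h : j < k then (if σ ⟨j, h⟩ = true then 1 else 0)
    else if h2 : j - k < n - k then (if γ ⟨j - k, h2⟩ = true then 1 else 0) else 0 with hF
  have key : ∀ i : Fin n, (if combine k hk π σ γ (π i) = true then 1 else 0) = F (i : ℕ) := by
    intro i
    simp only [combine, Equiv.symm_apply_apply, hF]
    by_cases h : (i : ℕ) < k
    · simp [h]
    · have h2 : (i : ℕ) - k < n - k := by have := i.isLt; omega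
      simp [h, h2]
  calc countOnes (combine k hk π σ γ)
      = ∑ i : Fin n, (if combine k hk π σ γ i = true then 1 else 0) := by
        rw [countOnes, Finset.card_filter]
    _ = ∑ i : Fin n, (if combine k hk π σ γ (π i) = true then 1 else 0) :=
        (Equiv.sum_comp π _).symm
    _ = ∑ i : Fin n, F (i : ℕ) := Finset.sum_congr rfl (fun i _ => key i)
    _ = ∑ j ∈ Finset.range n, F j := Fin.sum_univ_eq_sum_range F n
    _ = ∑ j ∈ Finset.range k, F j + ∑ j ∈ Finset.Ico k n, F j := by
        rw [Finset.range_eq_Ico, ← Finset.sum_Ico_consecutive F (Nat.zero_le k) hk,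
          ← Finset.range_eq_Ico]
    _ = countOnes σ + countOnes γ := by
        congr 1
        · rw [countOnes, Finset.card_filter, ← Fin.sum_univ_eq_sum_range F k]
          refine Finset.sum_congr rfl (fun t _ => ?_)
          simp [hF, t.isLt]
        · rw [Finset.sum_Ico_eq_sum_range, countOnes, Finset.card_filter,
            ← Fin.sum_univ_eq_sum_range (fun m => F (k + m)) (n - k)]
          refine Finset.sum_congr rfl (fun t _ => ?_)
          have h1 : ¬ k + (t : ℕ) < k := by omega
          have h2 : k + (t : ℕ) - k < n - k := by have := t.isLt; omega
          have h3 : k + (t : ℕ) - k = (t : ℕ) := by omega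
          simp only [hF, dif_neg h1, h3, dif_pos (by simpa [h3] using h2)]
          simp

/-- For every `p` with `2p ≤ n` and every variable order `π`, the family of pairs
`(σⁱ, γⁱ)`, `i = 0, …, p-1`, with `σⁱ = 0^{n-p+1-i} 1^i ∈ {0,1}^{n-p+1}` and
`γⁱ = 0^{i-1} 1^{p-i}` (`γ⁰ = 0^{p-1}`) on the remaining `n - k` variables
(concatenation interpreted via the order `π`), is a strong 1-fooling set of
size `p` for `MOD_n^p` at level `k = n - p + 1`: the family is injective (so the
set has `p` elements), each pair is mapped to 1, and mixed pairs are mapped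
to 0. -/
theorem mod_strong_fooling_set
    (n p k : ℕ) (hp : 1 ≤ p) (h2p : 2 * p ≤ n)
    (hk : k = n - p + 1) (hkn : k ≤ n)
    (π : Equiv.Perm (Fin n))
    (σ : Fin p → Fin k → Bool)
    (hσ : ∀ i t, σ i t = decide (k - (i : ℕ) ≤ (t : ℕ)))
    (γ : Fin p → Fin (n - k) → Bool)
    (hγ : ∀ i t, γ i t = decide (1 ≤ (i : ℕ) ∧ (i : ℕ) - 1 ≤ (t : ℕ))) :
    Function.Injective (fun i => (σ i, γ i)) ∧
    (∀ i, MODp n p (combine k hkn π (σ i) (γ i)) = true) ∧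
    (∀ i j, i ≠ j → MODp n p (combine k hkn π (σ i) (γ j)) = false) := by
  have hpk : p ≤ k := by omega
  have hm : n - k = p - 1 := by omega
  have hσc : ∀ i : Fin p, countOnes (σ i) = (i : ℕ) := by
    intro i
    have he : (Finset.univ.filter fun t : Fin k => σ i t = true) =
        Finset.univ.filter fun t : Fin k => k - (i : ℕ) ≤ (t : ℕ) := by
      apply Finset.filter_congr
      intro t _
      simp [hσ]
    rw [countOnes, he, card_ge_aux]
    have := i.isLt
    omega
  have hγc : ∀ j : Fin p, countOnes (γ j) =
      if (j : ℕ) = 0 then 0 else p - (j : ℕ) := by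
    intro j
    by_cases hj : (j : ℕ) = 0
    · have he : (Finset.univ.filter fun t : Fin (n - k) => γ j t = true) = ∅ := by
        apply Finset.filter_false_of_mem
        intro t _
        simp [hγ, hj]
      rw [countOnes, he, if_pos hj]
      simp
    · have he : (Finset.univ.filter fun t : Fin (n - k) => γ j t = true) =
          Finset.univ.filter fun t : Fin (n - k) => (j : ℕ) - 1 ≤ (t : ℕ) := by
        apply Finset.filter_congr
        intro t _
        simp [hγ]
        omega
      rw [countOnes, he, card_ge_aux, if_neg hj]
      have := j.isLt
      omega
  have hcomb : ∀ i j : Fin p, countOnes (combine k hkn π (σ i) (γ j)) =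
      (i : ℕ) + (if (j : ℕ) = 0 then 0 else p - (j : ℕ)) := by
    intro i j
    rw [countOnes_combine, hσc, hγc]
  refine ⟨?_, ?_, ?_⟩
  · intro i j h
    simp only [Prod.mk.injEq] at h
    have h2 := congrArg countOnes h.1
    rw [hσc, hσc] at h2
    exact Fin.ext h2
  · intro i
    unfold MODp; rw [hcomb, decide_eq_true_eq]
    by_cases hi : (i : ℕ) = 0
    · simp [hi]
    · have hip : (i : ℕ) < p := i.isLt
      have h1 : (i : ℕ) + (p - (i : ℕ)) = p := by omega
      rw [if_neg hi, h1]
  · intro i j hij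
    have hij' : (i : ℕ) ≠ (j : ℕ) := fun h => hij (Fin.ext h)
    have hip : (i : ℕ) < p := i.isLt
    have hjp : (j : ℕ) < p := j.isLt
    unfold MODp; rw [hcomb, decide_eq_false_iff_not]
    by_cases hj : (j : ℕ) = 0
    · rw [if_pos hj]
      exact not_dvd_aux p _ (by omega) (by omega) (by omega)
    · rw [if_neg hj]
      exact not_dvd_aux p _ (by omega) (by omega) (by omega)
end
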